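/- The KAM is locally linear: in any reachable KAM state, every maximal sequence of consecutive commutative transitions has length at most |t̄|, the size of the initial code, because each commutative transition strictly decreases the size of the current code and, by the subterm invariant, every code occurring in a reachable state is a subterm of the initial code. -/

import Mathlib

/-- Terms of the linear substitution calculus:
    `sub t x u` is the explicit substitution `t[x←u]`. -/
inductive Term : Type
  | var : ℕ → Term
  | lam : ℕ → Term → Term
  | app : Term → Term → Term
  | sub : Term → ℕ → Term → Term
deriving DecidableEq

namespace Term

/-- Free variables. -/
def fv : Term → Finset ℕ
  | var x => {x}
  | lam x t => t.fv.erase x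
  | app t u => t.fv ∪ u.fv
  | sub t x u => t.fv.erase x ∪ u.fv

end Term

/-- Substitution contexts `L ::= ⟨·⟩ | L[x←t]`. -/
inductive LCtx : Type
  | hole : LCtx
  | sub : LCtx → ℕ → Term → LCtx
deriving DecidableEq

def LCtx.plug : LCtx → Term → Term
  | .hole, t => t
  | .sub L x u, t => .sub (L.plug t) x u

/-- Weak head contexts `H ::= ⟨·⟩ | H t | H[x←t]`. -/
inductive HCtx : Type
  | hole : HCtx
  | app : HCtx → Term → HCtx
  | sub : HCtx → ℕ → Term → HCtx
deriving DecidableEq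

def HCtx.plug : HCtx → Term → Term
  | .hole, t => t
  | .app H u, t => .app (H.plug t) u
  | .sub H x u, t => .sub (H.plug t) x u

/-- `H.captures x` holds when the hole of `H` lies under a binder for `x`. -/
def HCtx.captures : HCtx → ℕ → Prop
  | .hole, _ => False
  | .app H _, x => H.captures x
  | .sub H y _, x => y = x ∨ H.captures x

/-- Free variables of a weak head context. -/
def HCtx.fv : HCtx → Finset ℕ
  | .hole => ∅
  | .app H t => H.fv ∪ t.fv
  | .sub H y t => H.fv.erase y ∪ t.fv

/-- Multiplicative (weak-head distance-β) reduction: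
    the closure under weak head contexts of `L⟨λx.t⟩ u ↦ L⟨t[x←u]⟩`. -/
inductive Rm : Term → Term → Prop
  | step (H : HCtx) (L : LCtx) (x : ℕ) (t u : Term) :
      Rm (H.plug (.app (L.plug (.lam x t)) u)) (H.plug (L.plug (.sub t x u)))

/-- Exponential (weak linear head substitution) reduction:
    the closure under weak head contexts of `H'⟨x⟩[x←u] ↦ H'⟨u⟩[x←u]`,
    with `x` not captured by `H'`. -/
inductive Re : Term → Term → Prop
  | step (H H' : HCtx) (x : ℕ) (u : Term) :
      ¬ H'.captures x →
      Re (H.plug (.sub (H'.plug (.var x)) x u)) (H.plug (.sub (H'.plug u) x u))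
/-- Pure λ-terms (codes of the machine). -/
inductive PTerm : Type
  | var : ℕ → PTerm
  | lam : ℕ → PTerm → PTerm
  | app : PTerm → PTerm → PTerm
deriving DecidableEq

def PTerm.toTerm : PTerm → Term
  | .var x => .var x
  | .lam x t => .lam x t.toTerm
  | .app t u => .app t.toTerm u.toTerm

def PTerm.fv : PTerm → Finset ℕ
  | .var x => {x}
  | .lam x t => t.fv.erase x
  | .app t u => t.fv ∪ u.fv

def PTerm.size : PTerm → ℕ
  | .var _ => 1
  | .lam _ t => t.size + 1
  | .app t u => t.size + u.size + 1

mutual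
  /-- Closures: a code together with an environment. -/
  inductive Clo : Type
    | mk : PTerm → Env → Clo
  /-- Local environments. -/
  inductive Env : Type
    | nil : Env
    | cons : ℕ → Clo → Env → Env
end

def Env.lookup : Env → ℕ → Option Clo
  | .nil, _ => none
  | .cons y c e, x => if y = x then some c else e.lookup x

mutual
  /-- Decoding of closures: `⟦(t̄,e)⟧ = ⟦e⟧⟨t̄⟩`. -/
  def Clo.decode : Clo → Term
    | .mk t e => Env.decodeIn e t.toTerm
  /-- Decoding of environments as contexts, given as functions on terms:
      `⟦ε⟧ = ⟨·⟩` and `⟦[x←c]::e⟧ = ⟦e⟧⟨⟨·⟩[x←⟦c⟧]⟩`. -/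
  def Env.decodeIn : Env → Term → Term
    | .nil, t => t
    | .cons x c e, t => Env.decodeIn e (.sub t x (Clo.decode c))
end

/-- Decoding of stacks as contexts: `⟦ε⟧ = ⟨·⟩`, `⟦c::π⟧ = ⟦π⟧⟨⟨·⟩ ⟦c⟧⟩`. -/
def stackDecodeIn : List Clo → Term → Term
  | [], t => t
  | c :: π, t => stackDecodeIn π (.app t (Clo.decode c))

/-- KAM states: code, environment, stack. -/
structure KState : Type where
  code : PTerm
  env : Env
  stack : List Clo

/-- Decoding of states: `⟦(t̄ | e | π)⟧ = ⟦π⟧⟨⟦e⟧⟨t̄⟩⟩`. -/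
def KState.decode (s : KState) : Term :=
  stackDecodeIn s.stack (Env.decodeIn s.env s.code.toTerm)

/-- KAM transitions: commutative, multiplicative and exponential. -/
inductive KStep : KState → KState → Prop
  | comm (t u : PTerm) (e : Env) (π : List Clo) :
      KStep ⟨.app t u, e, π⟩ ⟨t, e, Clo.mk u e :: π⟩
  | mul (x : ℕ) (t : PTerm) (e : Env) (c : Clo) (π : List Clo) :
      KStep ⟨.lam x t, e, c :: π⟩ ⟨t, Env.cons x c e, π⟩
  | exp (x : ℕ) (t : PTerm) (e e' : Env) (π : List Clo) :
      e.lookup x = some (Clo.mk t e') →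
      KStep ⟨.var x, e, π⟩ ⟨t, e', π⟩

/-- Initial states: closed code, empty environment and stack. -/
def KState.Initial (s : KState) : Prop :=
  s.code.fv = ∅ ∧ s.env = .nil ∧ s.stack = []

/-- Reachable states. -/
def KState.Reachable (s : KState) : Prop :=
  ∃ s₀, s₀.Initial ∧ Relation.ReflTransGen KStep s₀ s

/-- The commutative transition of the KAM, in isolation. -/
inductive KComm : KState → KState → Prop
  | comm (t u : PTerm) (e : Env) (π : List Clo) :
      KComm ⟨.app t u, e, π⟩ ⟨t, e, Clo.mk u e :: π⟩

/-- Sequences of consecutive commutative transitions, with length. -/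
def CIter : ℕ → KState → KState → Prop
  | 0, s, s' => s = s'
  | k + 1, s, s' => ∃ s'', KComm s s'' ∧ CIter k s'' s'

namespace PTerm

inductive IsChild : PTerm → PTerm → Prop
  | lam (x : ℕ) (t : PTerm) : IsChild t (.lam x t)
  | appLeft (t u : PTerm) : IsChild t (.app t u)
  | appRight (t u : PTerm) : IsChild u (.app t u)

def IsSubterm : PTerm → PTerm → Prop := Relation.ReflTransGen IsChild

lemma one_le_size (t : PTerm) : 1 ≤ t.size := by
  cases t <;> simp [size]

lemma IsChild.size_lt {t s : PTerm} (h : IsChild t s) : t.size < s.size := by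
  cases h <;> simp only [size] <;> omega

lemma IsSubterm.size_le {t s : PTerm} (h : IsSubterm t s) : t.size ≤ s.size := by
  induction h with
  | refl => exact le_rfl
  | tail _ hchild ih => exact ih.trans hchild.size_lt.le

end PTerm

mutual
  def Clo.AllCodes (p : PTerm → Prop) : Clo → Prop
    | .mk t e => p t ∧ Env.AllCodes p e
  def Env.AllCodes (p : PTerm → Prop) : Env → Prop
    | .nil => True
    | .cons _ c e => Clo.AllCodes p c ∧ Env.AllCodes p e
end

/-- The subterm invariant must also cover the codes stored in closures, since the exponential
transition jumps to one of them. -/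
def KState.AllCodes (p : PTerm → Prop) (s : KState) : Prop :=
  p s.code ∧ s.env.AllCodes p ∧ ∀ c ∈ s.stack, c.AllCodes p

lemma Env.AllCodes.lookup {p : PTerm → Prop} :
    ∀ {e : Env} {x : ℕ} {c : Clo}, e.AllCodes p → e.lookup x = some c → c.AllCodes p
  | .nil, _, _, _, hl => nomatch hl
  | .cons y c' e, x, c, ⟨hc', he⟩, hl => by
    rw [Env.lookup] at hl
    split at hl
    · exact Option.some_injective _ hl ▸ hc'
    · exact he.lookup hl

lemma KStep.allCodes {p : PTerm → Prop} (hp : ∀ t s, PTerm.IsChild t s → p s → p t)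
    {s s' : KState} (hstep : KStep s s') (hs : s.AllCodes p) : s'.AllCodes p := by
  obtain ⟨hcode, henv, hstack⟩ := hs
  cases hstep with
  | comm t u e π =>
    refine ⟨hp _ _ (.appLeft t u) hcode, henv, ?_⟩
    rintro c (_ | ⟨_, hc⟩)
    · exact ⟨hp _ _ (.appRight t u) hcode, henv⟩
    · exact hstack c hc
  | mul x t e c π =>
    exact ⟨hp _ _ (.lam x t) hcode, ⟨hstack c (.head _), henv⟩,
      fun c' hc' => hstack c' (.tail _ hc')⟩
  | exp x t e e' π hlookup =>
    obtain ⟨ht, he'⟩ := henv.lookup hlookup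
    exact ⟨ht, he', hstack⟩

lemma KState.Initial.allCodes_isSubterm {s₀ s : KState} (h₀ : s₀.Initial)
    (hs : Relation.ReflTransGen KStep s₀ s) : s.AllCodes (·.IsSubterm s₀.code) := by
  induction hs with
  | refl =>
    obtain ⟨-, henv, hstack⟩ := h₀
    refine ⟨.refl, ?_, ?_⟩
    · rw [henv]; trivial
    · simp [hstack]
  | tail _ hstep ih =>
    exact hstep.allCodes (fun _ _ hchild hsub => .head hchild hsub) ih

lemma KComm.size_lt {s s' : KState} (h : KComm s s') : s'.code.size < s.code.size := by
  cases h with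
  | comm t u e π => simp only [PTerm.size]; have := u.one_le_size; omega

lemma CIter.add_size_le {k : ℕ} {s s' : KState} (h : CIter k s s') :
    k + s'.code.size ≤ s.code.size := by
  induction k generalizing s with
  | zero => cases h; omega
  | succ k ih =>
    obtain ⟨s'', hcomm, hrest⟩ := h
    have := ih hrest
    have := hcomm.size_lt
    omega

/-- The KAM is locally linear: each commutative transition strictly decreases
    the size of the code and, thanks to the subterm invariant, every sequence
    of consecutive commutative transitions from a reachable state has length
    at most the size of the initial code. -/
theorem kam_locally_linear :
    (∀ s s', KComm s s' → s'.code.size < s.code.size) ∧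
    (∀ (s₀ s s' : KState) (k : ℕ),
      s₀.Initial → Relation.ReflTransGen KStep s₀ s →
      CIter k s s' → k ≤ s₀.code.size) := by
  refine ⟨fun _ _ h => h.size_lt, fun s₀ s s' k h₀ hs hiter => ?_⟩
  have hcode : s.code.size ≤ s₀.code.size := (h₀.allCodes_isSubterm hs).1.size_le
  have := hiter.add_size_le
  omega
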